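/- Let 0 < p < q, ν' = −1/q, and define J(s,x) = C_{p,ν'} ∫_0^∞ ((s − x^q v)_+)^{−pν'} v^{ν'−1} (∫_0^∞ λ^{2(p−1)ν'+1}/(1 + q²λ²/8) · exp(−λ²/(4v)) dλ) dv with C_{p,ν'} = 1/(2^{2(p−1)ν'+1} Γ(1−pν') Γ(1+pν') Γ(1+(p−1)ν')). Then J(s,x) ≤ (2Γ(1+1/q)/(pΓ(1+1/q−p/q))) · (q²/2)^{p/q} · s^{p/q} for all s, x ≥ 0. -/

import Mathlib

/-!
Since `(s - x^q v)_+ ≤ s`, the integral defining `J(s,x)` is at most `s^{p/q}` times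
`∫_0^∞ v^{-1/q-1} ∫_0^∞ λ^u / (1 + q²λ²/8) e^{-λ²/(4v)} dλ dv`, which has a closed form.
By Tonelli, integrating first in `v` gives `Γ(1/q) (λ²/4)^{-1/q}`; the substitution `λ² = y` then
leaves `∫_0^∞ y^{t-1} / (1 + c y) dy = c^{-t} Γ(t) Γ(1-t)`, itself obtained by Tonelli from
`1 / (1 + c y) = ∫_0^∞ e^{-(1 + c y) u} du`. The constants collapse by `Γ(1 + z) = z Γ(z)`.
-/

open MeasureTheory Real Set

/-- The function `J(s,x)` of Section 4, with `ν' = −1/q`. -/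
noncomputable def Jfun (p q s x : ℝ) : ℝ :=
  (1 / (2 ^ (2 * (p - 1) * (-1 / q) + 1) * Real.Gamma (1 - p * (-1 / q)) *
      Real.Gamma (1 + p * (-1 / q)) * Real.Gamma (1 + (p - 1) * (-1 / q)))) *
    ∫ v in Set.Ioi (0 : ℝ),
      (max (s - x ^ q * v) 0) ^ (-(p * (-1 / q))) * v ^ ((-1 / q) - 1) *
        ∫ l in Set.Ioi (0 : ℝ),
          l ^ (2 * (p - 1) * (-1 / q) + 1) / (1 + q ^ 2 * l ^ 2 / 8) *
            Real.exp (-l ^ 2 / (4 * v))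

theorem integrable_prod_of_nonneg {α β : Type*} [MeasurableSpace α] [MeasurableSpace β]
    {μ : Measure α} {ν : Measure β} [SFinite μ] [SFinite ν] {F : α → β → ℝ}
    (hFm : AEStronglyMeasurable (Function.uncurry F) (μ.prod ν))
    (hF0 : ∀ᵐ y ∂ν, ∀ᵐ x ∂μ, 0 ≤ F x y) (hF : ∀ᵐ y ∂ν, Integrable (F · y) μ)
    (hG : Integrable (fun y ↦ ∫ x, F x y ∂μ) ν) :
    Integrable (Function.uncurry F) (μ.prod ν) := by
  refine (integrable_prod_iff' hFm).2 ⟨hF, hG.congr ?_⟩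
  filter_upwards [hF0] with y hy
  exact integral_congr_ae (hy.mono fun x hx ↦ (Real.norm_of_nonneg hx).symm)

/- Integrability is read off from the closed form: a non-integrable function has integral `0`. -/
theorem integrableOn_rpow_mul_exp_neg_mul_Ioi {a r : ℝ} (ha : 0 < a) (hr : 0 < r) :
    IntegrableOn (fun t : ℝ ↦ t ^ (a - 1) * exp (-(r * t))) (Ioi 0) :=
  .of_integral_ne_zero <| by rw [integral_rpow_mul_exp_neg_mul_Ioi ha hr]; positivity

theorem integral_exp_neg_mul_Ioi {r : ℝ} (hr : 0 < r) :
    ∫ t in Ioi (0 : ℝ), exp (-(r * t)) = r⁻¹ := by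
  simpa [Gamma_one] using integral_rpow_mul_exp_neg_mul_Ioi one_pos hr

theorem integral_rpow_neg_sub_one_mul_exp_neg_div_Ioi {a c : ℝ} (ha : 0 < a) (hc : 0 < c) :
    ∫ v in Ioi (0 : ℝ), v ^ (-a - 1) * exp (-(c / v)) = c ^ (-a) * Gamma a := by
  rw [rpow_neg hc.le, ← inv_rpow hc.le, ← one_div, ← integral_rpow_mul_exp_neg_mul_Ioi ha hc,
    ← integral_comp_rpow_Ioi _ (by norm_num : (-1 : ℝ) ≠ 0)]
  refine setIntegral_congr_fun measurableSet_Ioi fun v (hv : 0 < v) ↦ ?_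
  rw [smul_eq_mul, rpow_neg_one, inv_rpow hv.le, ← rpow_neg hv.le, div_inv_eq_mul, abs_neg,
    abs_one, one_mul, ← mul_assoc, ← rpow_add hv]
  ring_nf

theorem integrableOn_rpow_neg_sub_one_mul_exp_neg_div_Ioi {a c : ℝ} (ha : 0 < a) (hc : 0 < c) :
    IntegrableOn (fun v : ℝ ↦ v ^ (-a - 1) * exp (-(c / v))) (Ioi 0) :=
  .of_integral_ne_zero <| by
    rw [integral_rpow_neg_sub_one_mul_exp_neg_div_Ioi ha hc]
    exact (mul_pos (rpow_pos_of_pos hc _) (Gamma_pos_of_pos ha)).ne'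

theorem integral_rpow_div_one_add_mul_Ioi {t c : ℝ} (ht0 : 0 < t) (ht1 : t < 1) (hc : 0 < c) :
    ∫ x in Ioi (0 : ℝ), x ^ (t - 1) / (1 + c * x) = c ^ (-t) * Gamma t * Gamma (1 - t) := by
  set F : ℝ → ℝ → ℝ := fun x u ↦ x ^ (t - 1) * exp (-((1 + c * x) * u))
  have hxu : ∀ u > 0, ∀ x, F x u = exp (-u) * (x ^ (t - 1) * exp (-((c * u) * x))) := by
    intro u _ x
    simp only [F]
    rw [mul_left_comm, ← exp_add]
    ring_nf
  have hG : ∀ u > 0, ∫ x in Ioi 0, F x u =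
      c ^ (-t) * Gamma t * (u ^ ((1 - t) - 1) * exp (-(1 * u))) := by
    intro u hu
    rw [setIntegral_congr_fun measurableSet_Ioi (fun x _ ↦ hxu u hu x), integral_const_mul,
      integral_rpow_mul_exp_neg_mul_Ioi ht0 (mul_pos hc hu), one_div, mul_inv,
      mul_rpow (inv_nonneg.2 hc.le) (inv_nonneg.2 hu.le), inv_rpow hc.le, inv_rpow hu.le,
      ← rpow_neg hc.le, ← rpow_neg hu.le, sub_sub_cancel_left, one_mul]
    ring
  have hF : Integrable (Function.uncurry F)
      ((volume.restrict (Ioi 0)).prod (volume.restrict (Ioi 0))) := by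
    refine integrable_prod_of_nonneg (Measurable.aestronglyMeasurable (by fun_prop)) ?_ ?_ ?_
    · filter_upwards [ae_restrict_mem measurableSet_Ioi] with u hu
      filter_upwards [ae_restrict_mem measurableSet_Ioi] with x (hx : 0 < x)
      positivity
    · filter_upwards [ae_restrict_mem measurableSet_Ioi] with u (hu : 0 < u)
      exact IntegrableOn.congr_fun (Integrable.const_mul
        (integrableOn_rpow_mul_exp_neg_mul_Ioi ht0 (by positivity)) _)
        (fun x _ ↦ (hxu u hu x).symm) measurableSet_Ioi
    · exact IntegrableOn.congr_fun (Integrable.const_mul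
        (integrableOn_rpow_mul_exp_neg_mul_Ioi (sub_pos.2 ht1) one_pos) _)
        (fun u hu ↦ (hG u hu).symm) measurableSet_Ioi
  have hx : ∀ x ∈ Ioi (0 : ℝ), ∫ u in Ioi 0, F x u = x ^ (t - 1) / (1 + c * x) := by
    intro x (hx : 0 < x)
    rw [integral_const_mul, integral_exp_neg_mul_Ioi (by positivity), div_eq_mul_inv]
  rw [← setIntegral_congr_fun measurableSet_Ioi hx, integral_integral_swap hF,
    setIntegral_congr_fun measurableSet_Ioi hG, integral_const_mul,
    integral_rpow_mul_exp_neg_mul_Ioi (sub_pos.2 ht1) one_pos, div_one, one_rpow, one_mul]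

theorem integral_rpow_div_one_add_mul_sq_Ioi {t c : ℝ} (ht0 : 0 < t) (ht1 : t < 1) (hc : 0 < c) :
    ∫ l in Ioi (0 : ℝ), l ^ (2 * t - 1) / (1 + c * l ^ 2) =
      c ^ (-t) * Gamma t * Gamma (1 - t) / 2 := by
  rw [← integral_rpow_div_one_add_mul_Ioi ht0 ht1 hc,
    ← integral_comp_rpow_Ioi (fun x ↦ x ^ (t - 1) / (1 + c * x)) two_ne_zero,
    eq_div_iff two_ne_zero, ← integral_mul_const]
  refine setIntegral_congr_fun measurableSet_Ioi fun l (hl : 0 < l) ↦ ?_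
  have hpow : l ^ ((2 : ℝ) - 1) * (l ^ (2 : ℝ)) ^ (t - 1) = l ^ (2 * t - 1) := by
    rw [← rpow_mul hl.le, ← rpow_add hl]
    ring_nf
  rw [smul_eq_mul, abs_two, mul_assoc, ← mul_div_assoc, hpow, rpow_two]
  ring

theorem integrableOn_rpow_div_one_add_mul_sq_Ioi {t c : ℝ} (ht0 : 0 < t) (ht1 : t < 1)
    (hc : 0 < c) : IntegrableOn (fun l : ℝ ↦ l ^ (2 * t - 1) / (1 + c * l ^ 2)) (Ioi 0) :=
  .of_integral_ne_zero <| by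
    rw [integral_rpow_div_one_add_mul_sq_Ioi ht0 ht1 hc]
    have := Gamma_pos_of_pos ht0
    have := Gamma_pos_of_pos (sub_pos.2 ht1)
    positivity

theorem integral_rpow_mul_integral_exp_neg_sq_div_Ioi {a t c : ℝ} (ha : 0 < a) (ht0 : 0 < t)
    (ht1 : t < 1) (hc : 0 < c) :
    IntegrableOn (fun v : ℝ ↦ v ^ (-a - 1) * ∫ l in Ioi (0 : ℝ),
        l ^ (2 * t - 1 + 2 * a) / (1 + c * l ^ 2) * exp (-l ^ 2 / (4 * v))) (Ioi 0) ∧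
    ∫ v in Ioi (0 : ℝ), v ^ (-a - 1) * ∫ l in Ioi (0 : ℝ),
        l ^ (2 * t - 1 + 2 * a) / (1 + c * l ^ 2) * exp (-l ^ 2 / (4 * v)) =
      4 ^ a * Gamma a * (c ^ (-t) * Gamma t * Gamma (1 - t) / 2) := by
  set F : ℝ → ℝ → ℝ := fun v l ↦
    v ^ (-a - 1) * (l ^ (2 * t - 1 + 2 * a) / (1 + c * l ^ 2) * exp (-l ^ 2 / (4 * v)))
  have hvl : ∀ l v, F v l =
      l ^ (2 * t - 1 + 2 * a) / (1 + c * l ^ 2) * (v ^ (-a - 1) * exp (-(l ^ 2 / 4 / v))) := by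
    intro l v
    simp only [F, neg_div, div_div]
    ring
  have hG : ∀ l > 0,
      ∫ v in Ioi 0, F v l = 4 ^ a * Gamma a * (l ^ (2 * t - 1) / (1 + c * l ^ 2)) := by
    intro l hl
    have hpow : (l ^ 2 / 4) ^ (-a) * l ^ (2 * t - 1 + 2 * a) = 4 ^ a * l ^ (2 * t - 1) := by
      rw [div_rpow (by positivity) (by norm_num), rpow_neg (by norm_num : (0 : ℝ) ≤ 4),
        div_inv_eq_mul, ← rpow_natCast, ← rpow_mul hl.le, mul_right_comm, ← rpow_add hl]
      push_cast
      ring_nf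
    simp only [hvl]
    rw [integral_const_mul, integral_rpow_neg_sub_one_mul_exp_neg_div_Ioi ha (by positivity)]
    linear_combination (Gamma a / (1 + c * l ^ 2)) * hpow
  have hF : Integrable (Function.uncurry F)
      ((volume.restrict (Ioi 0)).prod (volume.restrict (Ioi 0))) := by
    refine integrable_prod_of_nonneg (Measurable.aestronglyMeasurable (by fun_prop)) ?_ ?_ ?_
    · filter_upwards [ae_restrict_mem measurableSet_Ioi] with l (hl : 0 < l)
      filter_upwards [ae_restrict_mem measurableSet_Ioi] with v (hv : 0 < v)
      positivity
    · filter_upwards [ae_restrict_mem measurableSet_Ioi] with l (hl : 0 < l)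
      simp only [hvl]
      exact Integrable.const_mul
        (integrableOn_rpow_neg_sub_one_mul_exp_neg_div_Ioi ha (by positivity)) _
    · exact IntegrableOn.congr_fun (Integrable.const_mul
        (integrableOn_rpow_div_one_add_mul_sq_Ioi ht0 ht1 hc) _)
        (fun l hl ↦ (hG l hl).symm) measurableSet_Ioi
  have hv : ∀ v, ∫ l in Ioi 0, F v l = v ^ (-a - 1) * ∫ l in Ioi (0 : ℝ),
      l ^ (2 * t - 1 + 2 * a) / (1 + c * l ^ 2) * exp (-l ^ 2 / (4 * v)) :=
    fun v ↦ integral_const_mul _ _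
  refine ⟨hF.integral_prod_left.congr (ae_of_all _ hv), ?_⟩
  rw [← integral_congr_ae (ae_of_all _ hv), integral_integral_swap hF,
    setIntegral_congr_fun measurableSet_Ioi hG, integral_const_mul,
    integral_rpow_div_one_add_mul_sq_Ioi ht0 ht1 hc]

theorem setIntegral_rpow_max_sub_mul_le {g : ℝ → ℝ} {s b r : ℝ} (hs : 0 ≤ s) (hb : 0 ≤ b)
    (hr : 0 ≤ r) (hg0 : ∀ v > 0, 0 ≤ g v) (hg : IntegrableOn g (Ioi 0)) :
    ∫ v in Ioi 0, max (s - b * v) 0 ^ r * g v ≤ s ^ r * ∫ v in Ioi 0, g v := by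
  rw [← integral_const_mul]
  refine integral_mono_of_nonneg ?_ (hg.const_mul _) ?_
  · filter_upwards [ae_restrict_mem measurableSet_Ioi] with v hv
    exact mul_nonneg (rpow_nonneg (le_max_right _ _) _) (hg0 v hv)
  · filter_upwards [ae_restrict_mem measurableSet_Ioi] with v (hv : 0 < v)
    have hmax : max (s - b * v) 0 ≤ s := max_le (by nlinarith) hs
    exact mul_le_mul_of_nonneg_right (rpow_le_rpow (le_max_right _ _) hmax hr) (hg0 v hv)

theorem Jfun_constant_mul_eq {p q : ℝ} (hp : 0 < p) (hpq : p < q) :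
    1 / (2 ^ (2 * (p - 1) * (-1 / q) + 1) * Gamma (1 + p / q) * Gamma (1 - p / q) *
        Gamma (1 + 1 / q - p / q)) *
      (4 ^ (1 / q) * Gamma (1 / q) *
        ((q ^ 2 / 8) ^ (-(1 - p / q)) * Gamma (1 - p / q) * Gamma (1 - (1 - p / q)) / 2)) =
      2 * Gamma (1 + 1 / q) / (p * Gamma (1 + 1 / q - p / q)) * (q ^ 2 / 2) ^ (p / q) := by
  have hq : 0 < q := hp.trans hpq
  have hpow : (4 : ℝ) ^ (1 / q) * (q ^ 2 / 8) ^ (-(1 - p / q)) * q ^ 2 =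
      4 * 2 ^ (2 * (p - 1) * (-1 / q) + 1) * (q ^ 2 / 2) ^ (p / q) := by
    have hlog (n : ℕ) : log (2 ^ n) = n * log 2 := log_pow _ _
    refine log_injOn_pos (mem_Ioi.2 (by positivity)) (mem_Ioi.2 (by positivity)) ?_
    rw [log_mul (by positivity) (by positivity), log_mul (by positivity) (by positivity),
      log_mul (by positivity) (by positivity), log_mul (by positivity) (by positivity),
      log_rpow (by positivity), log_rpow (by positivity), log_rpow (by positivity),
      log_rpow (by positivity), log_div (by positivity) (by positivity),
      log_div (by positivity) (by positivity), log_pow, show (8 : ℝ) = 2 ^ 3 by norm_num,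
      show (4 : ℝ) = 2 ^ 2 by norm_num, hlog, hlog]
    field_simp
    ring
  have hΓp : Gamma (1 + p / q) = p / q * Gamma (p / q) := by
    rw [add_comm, Gamma_add_one (div_pos hp hq).ne']
  have hΓ1 : Gamma (1 + 1 / q) = 1 / q * Gamma (1 / q) := by
    rw [add_comm, Gamma_add_one (one_div_pos.2 hq).ne']
  have hpq' : p / q < 1 := (div_lt_one hq).2 hpq
  rw [hΓp, hΓ1, sub_sub_cancel]
  have := Gamma_pos_of_pos (div_pos hp hq)
  have := Gamma_pos_of_pos (sub_pos.2 hpq')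
  have := Gamma_pos_of_pos (show 0 < 1 + 1 / q - p / q by linarith [one_div_pos.2 hq])
  have : (0 : ℝ) < 2 ^ (2 * (p - 1) * (-1 / q) + 1) := by positivity
  -- opaque names keep `field_simp` from normalizing inside the Gamma arguments and exponents
  generalize Gamma (1 - p / q) = B at *
  generalize Gamma (1 + 1 / q - p / q) = C at *
  generalize (q ^ 2 / 8) ^ (-(1 - p / q)) = X at *
  generalize (2 : ℝ) ^ (2 * (p - 1) * (-1 / q) + 1) = T at *
  field_simp
  linear_combination hpow

theorem Jfun_upper_bound (p q : ℝ) (hp : 0 < p) (hpq : p < q)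
    (s x : ℝ) (hs : 0 ≤ s) (hx : 0 ≤ x) :
    Jfun p q s x ≤
      (2 * Real.Gamma (1 + 1 / q) / (p * Real.Gamma (1 + 1 / q - p / q))) *
        (q ^ 2 / 2) ^ (p / q) * s ^ (p / q) := by
  have hq : 0 < q := hp.trans hpq
  have ht0 : 0 < 1 - p / q := by rw [sub_pos, div_lt_one hq]; exact hpq
  have ht1 : 1 - p / q < 1 := by have := div_pos hp hq; linarith
  obtain ⟨hint, hval⟩ := integral_rpow_mul_integral_exp_neg_sq_div_Ioi (one_div_pos.2 hq) ht0 ht1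
    (c := q ^ 2 / 8) (by positivity)
  have hexp : 2 * (1 - p / q) - 1 + 2 * (1 / q) = 2 * (p - 1) * (-1 / q) + 1 := by
    field_simp; ring
  rw [hexp, ← neg_div] at hint hval
  simp only [← mul_div_right_comm (q ^ 2)] at hint hval
  have hinner0 : ∀ v > 0, 0 ≤ v ^ (-1 / q - 1) * ∫ l in Ioi (0 : ℝ),
      l ^ (2 * (p - 1) * (-1 / q) + 1) / (1 + q ^ 2 * l ^ 2 / 8) * exp (-l ^ 2 / (4 * v)) :=
    fun v hv ↦ mul_nonneg (rpow_nonneg hv.le _)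
      (setIntegral_nonneg measurableSet_Ioi fun l (hl : 0 < l) ↦ by positivity)
  have hC : 0 ≤ 1 / (2 ^ (2 * (p - 1) * (-1 / q) + 1) * Gamma (1 + p / q) * Gamma (1 - p / q) *
      Gamma (1 + 1 / q - p / q)) := by
    have := Gamma_pos_of_pos (show 0 < 1 + p / q by linarith)
    have := Gamma_pos_of_pos ht0
    have := Gamma_pos_of_pos (show 0 < 1 + 1 / q - p / q by linarith [one_div_pos.2 hq])
    positivity
  rw [Jfun, show 1 - p * (-1 / q) = 1 + p / q by ring, show 1 + p * (-1 / q) = 1 - p / q by ring,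
    show 1 + (p - 1) * (-1 / q) = 1 + 1 / q - p / q by ring, show -(p * (-1 / q)) = p / q by ring]
  simp only [mul_assoc (max _ _ ^ _)]
  calc _ ≤ _ := mul_le_mul_of_nonneg_left (setIntegral_rpow_max_sub_mul_le hs (rpow_nonneg hx q)
        (div_pos hp hq).le hinner0 hint) hC
    _ = _ := by rw [hval, ← Jfun_constant_mul_eq hp hpq]; ring
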